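/- arXiv:math/0610525 — 2 statements merged into one kernel-verified Lean document; each statement's English description precedes it below -/
import Mathlib

section
/- For every real number x and every integer m ≥ 1, ∏_{k=0}^{2m-1} sin(2^k·x) = (-1)^{m+1} · 2^{1-2m} · Σ_{j=0}^{2^{2m-1} - 1} (-1)^{s(j)} · cos((2j+1)·x). -/
/-- `s j` is the sum of the binary digits of `j`. -/
def s (j : ℕ) : ℕ := (Nat.digits 2 j).sum

lemma sdef (j : ℕ) : s j = j % 2 + s (j / 2) := by
  rcases Nat.eq_zero_or_pos j with h | h
  · simp [s, h]
  · unfold s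
    rw [Nat.digits_def' (by norm_num : 1 < 2) h]
    simp

lemma s_bit (q r : ℕ) (hr : r < 2) : s (2 * q + r) = s q + r := by
  rw [sdef]
  have h1 : (2*q+r) % 2 = r := by omega
  have h2 : (2*q+r)/2 = q := by omega
  rw [h1, h2, Nat.add_comm]

lemma s_add_pow (n : ℕ) : ∀ j < 2^n, s (2^n + j) = s j + 1 := by
  induction n with
  | zero =>
    intro j hj
    interval_cases j
    rw [sdef]
    simp [s]
  | succ n ih =>
    intro j hj
    have hp : (2:ℕ)^(n+1) = 2 * 2^n := by ring
    have h : 2^(n+1) + j = 2 * (2^n + j/2) + j % 2 := by omega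
    rw [h, s_bit _ _ (by omega), ih (j/2) (by omega), sdef j]
    omega

lemma s_reflect (n : ℕ) : ∀ j < 2^n, s (2^n - 1 - j) + s j = n := by
  induction n with
  | zero =>
    intro j hj
    interval_cases j
    simp [s]
  | succ n ih =>
    intro j hj
    have hp : (2:ℕ)^(n+1) = 2 * 2^n := by ring
    have h : 2^(n+1) - 1 - j = 2 * (2^n - 1 - j/2) + (1 - j % 2) := by omega
    have := ih (j/2) (by omega)
    rw [h, s_bit _ _ (by omega), sdef j]
    omega

lemma auxsplit (f : ℕ → ℝ) (m : ℕ) :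
    ∑ j ∈ Finset.range (2^(m+1)), f j =
      ∑ j ∈ Finset.range (2^m), (f (2^m - 1 - j) + f (2^m + j)) := by
  rw [show (2:ℕ)^(m+1) = 2^m + 2^m by ring, Finset.sum_range_add,
    Finset.sum_add_distrib, Finset.sum_range_reflect]

lemma key (x : ℝ) : ∀ n, 1 ≤ n →
    ∏ k ∈ Finset.range n, Real.sin (2 ^ k * x) =
      (-1 : ℝ) ^ ((n - 1) / 2) * (2 : ℝ) ^ (1 - (n : ℤ)) *
        ∑ j ∈ Finset.range (2 ^ (n - 1)),
          (-1 : ℝ) ^ s j *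
            (if n % 2 = 0 then Real.cos ((2 * (j:ℝ) + 1) * x)
             else Real.sin ((2 * (j:ℝ) + 1) * x)) := by
  intro n hn
  induction n, hn using Nat.le_induction with
  | base =>
    norm_num [s]
  | succ n hn ih =>
    obtain ⟨m, rfl⟩ : ∃ m, n = m + 1 := ⟨n - 1, by omega⟩
    rw [Finset.prod_range_succ, ih]
    simp only [Nat.add_sub_cancel]
    rw [auxsplit, show (1 - ((m+1+1:ℕ):ℤ)) = (1 - ((m+1:ℕ):ℤ)) + (-1) by push_cast; ring,
      zpow_add₀ (by norm_num : (2:ℝ) ≠ 0), zpow_neg_one]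
    simp only [Finset.mul_sum, Finset.sum_mul]
    apply Finset.sum_congr rfl
    intro j hj
    rw [Finset.mem_range] at hj
    -- sign lemmas
    have hpm : (2:ℕ)^(m+1) = 2 * 2^m := by ring
    have h1 : ((-1:ℝ))^(s (2^m + j)) = -(-1:ℝ)^(s j) := by
      rw [s_add_pow m j hj, pow_succ]; ring
    have h2 : ((-1:ℝ))^(s (2^m - 1 - j)) = (-1:ℝ)^m * (-1:ℝ)^(s j) := by
      have h := s_reflect m j hj
      have : ((-1:ℝ))^(s (2^m - 1 - j)) * (-1:ℝ)^(s j) = (-1:ℝ)^m := by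
        rw [← pow_add, h]
      calc ((-1:ℝ))^(s (2^m - 1 - j))
          = ((-1:ℝ))^(s (2^m - 1 - j)) * ((-1:ℝ)^(s j) * (-1:ℝ)^(s j)) := by
            rw [← pow_add, ← two_mul, pow_mul]; norm_num
        _ = (-1:ℝ)^m * (-1:ℝ)^(s j) := by rw [← mul_assoc, this]
    -- cast lemmas for arguments
    have hc1 : (2 * ((2^m - 1 - j : ℕ):ℝ) + 1) = 2^(m+1) - (2 * (j:ℝ) + 1) := by
      have hnat : (2 * (2^m - 1 - j) + 1) + (2*j+1) = 2^(m+1) := by omega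
      have : ((2 * ((2^m - 1 - j : ℕ):ℝ) + 1) + (2 * (j:ℝ) + 1)) = (2:ℝ)^(m+1) := by
        exact_mod_cast hnat
      linarith
    have hc2 : (2 * ((2^m + j : ℕ):ℝ) + 1) = 2^(m+1) + (2 * (j:ℝ) + 1) := by
      push_cast
      ring
    rw [h1, h2, hc1, hc2]
    rcases Nat.even_or_odd m with ⟨a, rfl⟩ | ⟨a, rfl⟩
    · have e1 : ¬((a+a+1)%2 = 0) := by omega
      have e2 : (a+a+1+1)%2 = 0 := by omega
      simp only [if_neg e1, if_pos e2]
      rw [show (a+a)/2 = a by omega, show (a+a+1)/2 = a by omega,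
        show ((-1:ℝ))^(a+a) = 1 by rw [← two_mul, pow_mul]; norm_num,
        ]
      simp only [sub_mul, add_mul, Real.cos_sub, Real.cos_add, Real.sin_add, Real.sin_sub]
      ring
    · have e1 : (2*a+1+1)%2 = 0 := by omega
      have e2 : ¬((2*a+1+1+1)%2 = 0) := by omega
      simp only [if_pos e1, if_neg e2]
      rw [show (2*a+1)/2 = a by omega, show (2*a+1+1)/2 = a+1 by omega,
        show ((-1:ℝ))^(2*a+1) = -1 by rw [pow_succ, pow_mul]; norm_num,
        pow_succ]
      simp only [sub_mul, add_mul, Real.cos_sub, Real.cos_add, Real.sin_add, Real.sin_sub]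
      ring

theorem stmt_13 (x : ℝ) (m : ℕ) (hm : 1 ≤ m) :
    ∏ k ∈ Finset.range (2 * m), Real.sin (2 ^ k * x) =
      (-1 : ℝ) ^ (m + 1) * (2 : ℝ) ^ (1 - (2 * m : ℤ)) *
        ∑ j ∈ Finset.range (2 ^ (2 * m - 1)),
          (-1 : ℝ) ^ s j * Real.cos ((2 * (j : ℝ) + 1) * x) := by
  obtain ⟨k, rfl⟩ : ∃ k, m = k + 1 := ⟨m - 1, by omega⟩
  rw [key x (2*(k+1)) (by omega)]
  have e : (2*(k+1)) % 2 = 0 := by omega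
  simp only [if_pos e]
  rw [show (2*(k+1)-1)/2 = k by omega,
    show ((-1:ℝ))^(k+1+1) = (-1:ℝ)^k by rw [pow_succ, pow_succ]; ring,
    show ((2*(k+1):ℕ):ℤ) = ((2*((k+1):ℕ)):ℤ) by push_cast; ring]
end

section
/- (Multigrade equalities à la Prouhet) Let m ≥ 1 be an integer and λ_0, …, λ_{2m-1} complex numbers. Then for every integer ℓ with 0 ≤ ℓ ≤ m - 1, Σ_{j=0}^{2^{2m} - 1} (-1)^{s(j)} · (Σ_{q=0}^{2m-1} σ_q(j)·λ_q)^{2ℓ} = 0. -/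
/-- `sigma j q = 2 e_q(j) - 1`, where `j = ∑_q e_q(j) 2^q` is the binary
expansion of `j`. -/
noncomputable def sigma (j q : ℕ) : ℂ := 2 * ((j.testBit q).toNat : ℂ) - 1

lemma s_two_mul (i : ℕ) : s (2 * i) = s i := by
  rcases Nat.eq_zero_or_pos i with h | h
  · simp [h]
  · unfold s
    rw [Nat.digits_def' (by norm_num) (by omega)]
    simp [Nat.mul_div_cancel_left, Nat.mul_mod_right]

lemma s_two_mul_add_one (i : ℕ) : s (2 * i + 1) = s i + 1 := by
  unfold s
  rw [Nat.digits_def' (by norm_num) (by omega)]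
  have h1 : (2 * i + 1) % 2 = 1 := by omega
  have h2 : (2 * i + 1) / 2 = i := by omega
  rw [h1, h2, List.sum_cons]
  omega

lemma sigma_succ (j q : ℕ) : sigma j (q + 1) = sigma (j / 2) q := by
  simp [sigma, Nat.testBit_add_one]

lemma sum_range_two_mul (N : ℕ) (f : ℕ → ℂ) :
    ∑ j ∈ Finset.range (2 * N), f j
      = ∑ i ∈ Finset.range N, (f (2 * i) + f (2 * i + 1)) := by
  induction N with
  | zero => simp
  | succ N ih =>
      have : 2 * (N + 1) = 2 * N + 1 + 1 := by ring
      rw [this, Finset.sum_range_succ, Finset.sum_range_succ, ih,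
        Finset.sum_range_succ]
      ring

/-- Key induction: for any `k < n` the alternating sum vanishes. -/
lemma key_s16 (n : ℕ) : ∀ k < n, ∀ lam : ℕ → ℂ,
    ∑ j ∈ Finset.range (2 ^ n),
        (-1 : ℂ) ^ s j * (∑ q ∈ Finset.range n, sigma j q * lam q) ^ k = 0 := by
  induction n with
  | zero => intro k hk; omega
  | succ n ih =>
      intro k hk lam
      have hpow : 2 ^ (n + 1) = 2 * 2 ^ n := by ring
      rw [hpow, sum_range_two_mul]
      -- rewrite each summand
      set c : ℂ := lam 0 with hc
      have inner : ∀ b i : ℕ, b < 2 →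
          ∑ q ∈ Finset.range (n + 1), sigma (2 * i + b) q * lam q
            = (∑ q ∈ Finset.range n, sigma i q * lam (q + 1))
              + sigma (2 * i + b) 0 * c := by
        intro b i hb
        rw [Finset.sum_range_succ']
        congr 1
        apply Finset.sum_congr rfl
        intro q _
        rw [sigma_succ]
        have : (2 * i + b) / 2 = i := by omega
        rw [this]
      have sig0 : ∀ i : ℕ, sigma (2 * i) 0 = -1 := by
        intro i
        simp [sigma, Nat.testBit_zero, Nat.mul_mod_right]
      have sig1 : ∀ i : ℕ, sigma (2 * i + 1) 0 = 1 := by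
        intro i
        have : (2 * i + 1) % 2 = 1 := by omega
        simp [sigma, Nat.testBit_zero, this]
        ring
      have step : ∀ i : ℕ,
          (-1 : ℂ) ^ s (2 * i) *
              (∑ q ∈ Finset.range (n + 1), sigma (2 * i) q * lam q) ^ k
            + (-1 : ℂ) ^ s (2 * i + 1) *
              (∑ q ∈ Finset.range (n + 1), sigma (2 * i + 1) q * lam q) ^ k
          = (-1 : ℂ) ^ s i *
              (((∑ q ∈ Finset.range n, sigma i q * lam (q + 1)) - c) ^ k
                - ((∑ q ∈ Finset.range n, sigma i q * lam (q + 1)) + c) ^ k) := by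
        intro i
        have h0 : ∑ q ∈ Finset.range (n + 1), sigma (2 * i) q * lam q
            = (∑ q ∈ Finset.range n, sigma i q * lam (q + 1)) + sigma (2 * i) 0 * c := by
          simpa using inner 0 i (by omega)
        rw [h0, inner 1 i (by omega), sig0, sig1,
          s_two_mul, s_two_mul_add_one, pow_succ]
        ring
      calc ∑ i ∈ Finset.range (2 ^ n),
              ((-1 : ℂ) ^ s (2 * i) *
                (∑ q ∈ Finset.range (n + 1), sigma (2 * i) q * lam q) ^ k
              + (-1 : ℂ) ^ s (2 * i + 1) *
                (∑ q ∈ Finset.range (n + 1), sigma (2 * i + 1) q * lam q) ^ k)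
          = ∑ i ∈ Finset.range (2 ^ n),
              (-1 : ℂ) ^ s i *
                (((∑ q ∈ Finset.range n, sigma i q * lam (q + 1)) - c) ^ k
                  - ((∑ q ∈ Finset.range n, sigma i q * lam (q + 1)) + c) ^ k) := by
            exact Finset.sum_congr rfl fun i _ => step i
        _ = 0 := by
            -- binomial expansion
            have expand : ∀ B : ℂ,
                (B - c) ^ k - (B + c) ^ k
                  = ∑ t ∈ Finset.range (k + 1),
                      B ^ t * (((-c) ^ (k - t) - c ^ (k - t)) * (k.choose t)) := by
              intro B
              rw [sub_eq_add_neg B c, add_pow, add_pow, ← Finset.sum_sub_distrib]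
              apply Finset.sum_congr rfl
              intro t _
              ring
            simp_rw [expand, Finset.mul_sum]
            rw [Finset.sum_comm]
            apply Finset.sum_eq_zero
            intro t ht
            rw [Finset.mem_range] at ht
            rcases eq_or_lt_of_le (Nat.lt_succ_iff.mp ht) with h | h
            · -- t = k : coefficient vanishes
              subst h
              simp
            · -- t < k ≤ n : inductive hypothesis
              have hxt : t < n := by omega
              have := ih t hxt (fun q => lam (q + 1))
              simp_rw [← mul_assoc]
              rw [← Finset.sum_mul, ← Finset.sum_mul, this, zero_mul, zero_mul]

theorem stmt_16 (m : ℕ) (hm : 1 ≤ m) (lam : ℕ → ℂ) (l : ℕ) (hl : l ≤ m - 1) :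
    ∑ j ∈ Finset.range (2 ^ (2 * m)),
        (-1 : ℂ) ^ s j *
          (∑ q ∈ Finset.range (2 * m), sigma j q * lam q) ^ (2 * l) = 0 := by
  exact key_s16 (2 * m) (2 * l) (by omega) lam
end
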